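/- arXiv:2106.06777 — 2 statements merged into one kernel-verified Lean document; each statement's English description precedes it below -/
import Mathlib

section
/- Existence of an optimal static strategy (Corollary 1, fixed-point form): there exists a selection σ assigning to each q : T an action σ q ∈ A q such that the affine operator F_σ defined by (F_σ x) q = c q (σ q) + ∑_{q' : T} M q (σ q) q' * x q' satisfies F_σ x* = x* and ⨆ k, (F_σ^[k] 0) q = x* q for every q; i.e. the least fixed point of F_σ coincides with the least fixed point x* of F. -/
/-!
The Bellman operator `F` is, in each coordinate, a finite minimum of affine maps with
nonnegative coefficients, so it commutes with suprema of increasing sequences and, by Kleene's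
theorem, `x*` is a fixed point of `F`. Choosing for every type an action attaining the minimum
in `(F x*) q` gives a static strategy `σ` with `F_σ x* = F x* = x*`. The Kleene iterates of
`F_σ` stay below its fixed point `x*`, and they dominate those of `F` because `F ≤ F_σ`.
-/

open scoped ENNReal
open Finset Function OmegaCompletePartialOrder

theorem isFixedPt_iSup_iterate_bot {α : Type*} [CompleteLattice α] {f : α → α}
    (hf : Monotone f) (hcont : ∀ u : ℕ → α, Monotone u → f (⨆ n, u n) ≤ ⨆ n, f (u n)) :
    IsFixedPt f (⨆ n, f^[n] ⊥) := by
  let f' : α →o α := ⟨f, hf⟩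
  have hω : ωScottContinuous f' := .of_monotone_map_ωSup
    ⟨hf, fun u => (hcont u u.monotone).antisymm (iSup_le fun n => hf (le_iSup u n))⟩
  change IsFixedPt f' (⨆ n, f'^[n] ⊥)
  rw [← fixedPoints.lfp_eq_sSup_iterate f' hω]
  exact f'.map_lfp

theorem Finset.inf'_iSup_of_monotone {ι κ α : Type*} [Preorder κ] [IsDirectedOrder κ]
    [Nonempty κ] [Order.Frame α] (s : Finset ι) (hs : s.Nonempty) {g : ι → κ → α}
    (hg : ∀ i ∈ s, Monotone (g i)) :
    s.inf' hs (fun i => ⨆ k, g i k) = ⨆ k, s.inf' hs (fun i => g i k) := by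
  simp only [inf'_eq_inf, inf_eq_iInf]
  exact (s.finite_toSet.iSup_biInf_of_monotone hg).symm

theorem ENNReal.add_sum_mul_iSup_of_monotone {κ T : Type*} [Fintype T] [Preorder κ]
    [IsDirectedOrder κ] [Nonempty κ] (c : ℝ≥0∞) (m : T → ℝ≥0∞) {u : κ → T → ℝ≥0∞}
    (hu : Monotone u) : c + ∑ t, m t * ⨆ k, u k t = ⨆ k, (c + ∑ t, m t * u k t) := by
  simp_rw [ENNReal.mul_iSup]
  rw [ENNReal.finsetSum_iSup_of_monotone (f := fun t k => m t * u k t)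
    fun t _ _ h => mul_le_mul_right (hu h t) _, ENNReal.add_iSup]

section Bellman

variable {T Act : Type*} [Fintype T] (c : T → Act → ℝ≥0∞) (M : T → Act → T → ℝ≥0∞)

/-- The operator `F_σ` of a static strategy `σ` is `bellman c M (fun q => {σ q}) _`. -/
noncomputable def bellman (A : T → Finset Act) (hA : ∀ q, (A q).Nonempty) (x : T → ℝ≥0∞)
    (q : T) : ℝ≥0∞ :=
  (A q).inf' (hA q) fun a => c q a + ∑ q', M q a q' * x q'

variable {c M} {A : T → Finset Act} (hA : ∀ q, (A q).Nonempty)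

theorem monotone_bellman : Monotone (bellman c M A hA) := fun _ _ hxy q =>
  inf'_mono_fun fun _ _ => by gcongr with q'; exact hxy q'

theorem bellman_le_of_subset {B : T → Finset Act} (hB : ∀ q, (B q).Nonempty)
    (hBA : ∀ q, B q ⊆ A q) : bellman c M A hA ≤ bellman c M B hB := fun _ q =>
  inf'_mono _ (hBA q) (hB q)

theorem bellman_iSup_of_monotone {κ : Type*} [Preorder κ] [IsDirectedOrder κ] [Nonempty κ]
    {u : κ → T → ℝ≥0∞} (hu : Monotone u) :
    bellman c M A hA (⨆ n, u n) = ⨆ n, bellman c M A hA (u n) := by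
  ext q
  simp only [bellman, iSup_apply, ENNReal.add_sum_mul_iSup_of_monotone _ _ hu]
  exact (A q).inf'_iSup_of_monotone (hA q) fun a _ _ _ h => by gcongr with q'; exact hu h q'

theorem isFixedPt_bellman_iSup_iterate_zero :
    IsFixedPt (bellman c M A hA) fun q => ⨆ n, (bellman c M A hA)^[n] 0 q := by
  have h := isFixedPt_iSup_iterate_bot (monotone_bellman hA) fun _ hu =>
    (bellman_iSup_of_monotone (c := c) (M := M) hA hu).le
  rw [show (⊥ : T → ℝ≥0∞) = 0 from funext fun _ => bot_eq_zero] at h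
  rwa [show (fun q => ⨆ n, (bellman c M A hA)^[n] 0 q) = ⨆ n, (bellman c M A hA)^[n] 0 from
    funext fun q => (iSup_apply ..).symm]

end Bellman

theorem exists_optimal_static_strategy_general {T Act : Type*} [Fintype T]
    (A : T → Finset Act) (hA : ∀ q, (A q).Nonempty)
    (c : T → Act → ℝ≥0∞)
    (M : T → Act → T → ℝ≥0∞)
    (F : (T → ℝ≥0∞) → (T → ℝ≥0∞))
    (hF : ∀ x q, F x q = (A q).inf' (hA q) (fun a => c q a + ∑ q', M q a q' * x q')) :
    ∃ σ : T → Act, (∀ q, σ q ∈ A q) ∧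
      ∀ Fσ : (T → ℝ≥0∞) → (T → ℝ≥0∞),
        (∀ x q, Fσ x q = c q (σ q) + ∑ q', M q (σ q) q' * x q') →
        (Fσ (fun q => ⨆ k, F^[k] 0 q) = fun q => ⨆ k, F^[k] 0 q) ∧
        ∀ q, (⨆ k, Fσ^[k] 0 q) = ⨆ k, F^[k] 0 q := by
  obtain rfl : F = bellman c M A hA := funext fun x => funext (hF x)
  have hfix := isFixedPt_bellman_iSup_iterate_zero hA (c := c) (M := M)
  set xstar := fun q => ⨆ k, (bellman c M A hA)^[k] 0 q
  choose σ hσA hσ using fun q => (A q).exists_mem_eq_inf' (hA q)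
    fun a => c q a + ∑ q', M q a q' * xstar q'
  refine ⟨σ, hσA, fun Fσ hFσ => ?_⟩
  have hσ_nonempty : ∀ q, ({σ q} : Finset Act).Nonempty := fun q => singleton_nonempty _
  obtain rfl : Fσ = bellman c M (fun q => {σ q}) hσ_nonempty :=
    funext fun x => funext fun q => by rw [hFσ, bellman, inf'_singleton]
  have hσfix : bellman c M (fun q => {σ q}) hσ_nonempty xstar = xstar :=
    funext fun q => by rw [bellman, inf'_singleton, ← hσ]; exact congrFun hfix q
  refine ⟨hσfix, fun q => le_antisymm (iSup_le fun k => ?_) ?_⟩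
  · exact ((monotone_bellman _).iterate k (fun _ => zero_le) q).trans_eq
      (congrFun (iterate_fixed hσfix k) q)
  · exact iSup_mono fun k => (monotone_bellman hA).iterate_le_of_le
      (bellman_le_of_subset hA _ fun q => singleton_subset_iff.mpr (hσA q)) k 0 q

/-- Corollary 1 (fixed-point form): there exists an optimal static strategy
`σ`, i.e. a selection of an action `σ q ∈ A q` for each type `q`, such that the
affine operator `F_σ` has the least fixed point `x*` of `F` as a fixed point,
and the least fixed point of `F_σ` coincides with `x*`. -/
theorem exists_optimal_static_strategy {T Act : Type*} [Fintype T] [Nonempty T]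
    (A : T → Finset Act) (hA : ∀ q, (A q).Nonempty)
    (c : T → Act → ℝ≥0∞) (hc : ∀ q, ∀ a ∈ A q, 0 < c q a ∧ c q a < ∞)
    (M : T → Act → T → ℝ≥0∞) (hM : ∀ q, ∀ a ∈ A q, ∀ q', M q a q' < ∞)
    (F : (T → ℝ≥0∞) → (T → ℝ≥0∞))
    (hF : ∀ x q, F x q = (A q).inf' (hA q) (fun a => c q a + ∑ q', M q a q' * x q')) :
    ∃ σ : T → Act, (∀ q, σ q ∈ A q) ∧
      ∀ Fσ : (T → ℝ≥0∞) → (T → ℝ≥0∞),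
        (∀ x q, Fσ x q = c q (σ q) + ∑ q', M q (σ q) q' * x q') →
        (Fσ (fun q => ⨆ k, F^[k] 0 q) = fun q => ⨆ k, F^[k] 0 q) ∧
        ∀ q, (⨆ k, Fσ^[k] 0 q) = ⨆ k, F^[k] 0 q :=
  exists_optimal_static_strategy_general A hA c M F hF
end

section
/- Theorem 4 (convergence in expectation from arbitrary nonnegative initialization): suppose additionally that p q ≥ p_min for all q for some p_min > 0 and that ∑_i λ i = ∞ (the series of learning rates diverges). Then for every initial vector Q_0 with Q_0 q ≥ 0 for all q, the expected Q-learning iterates converge to the fixed point: Q_i q → c* q as i → ∞, for every q. -/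
open Filter Matrix

lemma aux_pow_nonneg {n : ℕ} (B : Matrix (Fin n) (Fin n) ℝ) (hB : ∀ i j, 0 ≤ B i j) :
    ∀ k i j, 0 ≤ (B ^ k) i j := by
  intro k
  induction k with
  | zero => intro i j; simp [Matrix.one_apply]; split <;> norm_num
  | succ k ih =>
    intro i j
    rw [pow_succ, Matrix.mul_apply]
    exact Finset.sum_nonneg fun l _ => mul_nonneg (ih i l) (hB l j)

/-- Theorem 4 (convergence in expectation from arbitrary nonnegative
initialization): if each entry is updated with probability at least
`p_min > 0` and the learning rates sum to infinity, then for every nonnegative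
initial vector `Q 0` the expected Q-learning iterates converge to `c*`. -/
theorem expected_q_values_converge {n : ℕ}
    (B : Matrix (Fin n) (Fin n) ℝ) (hB : ∀ i j, 0 ≤ B i j)
    (hpow : ∀ i j, Tendsto (fun k => (B ^ k) i j) atTop (nhds 0))
    (c : Fin n → ℝ) (hc : ∀ i, 0 < c i)
    (cstar : Fin n → ℝ) (hcstar : cstar = B.mulVec cstar + c)
    (lam : ℕ → ℝ) (hlam : ∀ i, 0 ≤ lam i ∧ lam i ≤ 1)
    (hlamdiv : Tendsto (fun N => ∑ i ∈ Finset.range N, lam i) atTop atTop)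
    (p : Fin n → ℝ) (hp : ∀ q, 0 < p q ∧ p q ≤ 1)
    (pmin : ℝ) (hpmin : 0 < pmin) (hppmin : ∀ q, pmin ≤ p q)
    (Q : ℕ → Fin n → ℝ)
    (hQ : ∀ i q, Q (i + 1) q
      = (1 - lam i * p q) * Q i q + lam i * p q * (B.mulVec (Q i) + c) q)
    (hQ0 : ∀ q, 0 ≤ Q 0 q) :
    ∀ q, Tendsto (fun i => Q i q) atTop (nhds (cstar q)) := by
  intro q
  haveI : Nonempty (Fin n) := ⟨q⟩
  have hBpow := aux_pow_nonneg B hB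
  have hBc : ∀ r, (B.mulVec cstar) r = cstar r - c r := by
    intro r
    have := congrFun hcstar r
    simp only [Pi.add_apply] at this
    linarith
  -- s k r := ((B ^ k).mulVec cstar) r
  have hs : ∀ k r, ((B ^ (k+1)).mulVec cstar) r
      = ((B ^ k).mulVec cstar) r - ((B ^ k).mulVec c) r := by
    intro k r
    rw [pow_succ, ← Matrix.mulVec_mulVec]
    have : B.mulVec cstar = fun j => cstar j - c j := funext hBc
    rw [this]
    simp [Matrix.mulVec, dotProduct, mul_sub, Finset.sum_sub_distrib]
  have hslim : ∀ r, Tendsto (fun k => ((B ^ k).mulVec cstar) r) atTop (nhds 0) := by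
    intro r
    simp only [Matrix.mulVec, dotProduct]
    have h := tendsto_finset_sum Finset.univ (fun j (_ : j ∈ Finset.univ) => (hpow r j).mul_const (cstar j))
    simpa using h
  have hcle : ∀ r, c r ≤ cstar r := by
    intro r
    have hmono : ∀ k, ((B ^ (k+1)).mulVec cstar) r ≤ cstar r - c r := by
      intro k
      induction k with
      | zero =>
        rw [hs 0 r]
        simp [Matrix.one_mulVec]
      | succ k ih =>
        rw [hs (k+1) r]
        have h0 : 0 ≤ ((B ^ (k+1)).mulVec c) r := by
          show (0:ℝ) ≤ ∑ j, (B ^ (k+1)) r j * c j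
          exact Finset.sum_nonneg fun j _ => mul_nonneg (hBpow (k+1) r j) (hc j).le
        linarith
    have hev : ∀ᶠ k in atTop, ((B ^ k).mulVec cstar) r ≤ cstar r - c r := by
      filter_upwards [eventually_ge_atTop 1] with k hk
      obtain ⟨m, rfl⟩ := Nat.exists_eq_add_of_le hk
      simpa [add_comm] using hmono m
    have := le_of_tendsto (hslim r) hev
    linarith
  have hcpos : ∀ r, 0 < cstar r := fun r => lt_of_lt_of_le (hc r) (hcle r)
  set θ : ℝ := Finset.univ.sup' Finset.univ_nonempty (fun r => 1 - c r / cstar r) with hθdef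
  have hθle : ∀ r, 1 - c r / cstar r ≤ θ := fun r => Finset.le_sup' (fun r => 1 - c r / cstar r) (Finset.mem_univ r)
  have hθ1 : θ < 1 := by
    rw [hθdef, Finset.sup'_lt_iff]
    intro r _
    have := div_pos (hc r) (hcpos r)
    linarith
  have hθ0 : 0 ≤ θ := by
    have h1 : c q / cstar q ≤ 1 := (div_le_one (hcpos q)).mpr (hcle q)
    have := hθle q
    linarith
  have hBθ : ∀ r, (B.mulVec cstar) r ≤ θ * cstar r := by
    intro r
    rw [hBc r]
    have h1 := mul_le_mul_of_nonneg_right (hθle r) (hcpos r).le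
    have heq : (1 - c r / cstar r) * cstar r = cstar r - c r := by
      rw [sub_mul, one_mul, div_mul_cancel₀ _ (hcpos r).ne']
    linarith [heq ▸ h1]
  set rr : ℝ := pmin * (1 - θ) with hrrdef
  have hrr0 : 0 < rr := mul_pos hpmin (by linarith)
  have hpmin1 : pmin ≤ 1 := le_trans (hppmin q) (hp q).2
  have hrr1 : rr ≤ 1 := by nlinarith
  set M : ℝ := Finset.univ.sup' Finset.univ_nonempty (fun r => |Q 0 r - cstar r| / cstar r) with hMdef
  have hM0 : 0 ≤ M :=
    le_trans (div_nonneg (abs_nonneg _) (hcpos q).le) (Finset.le_sup' (fun r => |Q 0 r - cstar r| / cstar r) (Finset.mem_univ q))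
  have hM : ∀ r, |Q 0 r - cstar r| ≤ M * cstar r := by
    intro r
    have h := Finset.le_sup' (fun r => |Q 0 r - cstar r| / cstar r) (Finset.mem_univ r)
    rwa [div_le_iff₀ (hcpos r)] at h
  set D : ℕ → ℝ := fun i => M * ∏ j ∈ Finset.range i, (1 - lam j * rr) with hDdef
  have hfac : ∀ j, 0 ≤ 1 - lam j * rr ∧ 1 - lam j * rr ≤ 1 := by
    intro j
    have h1 := (hlam j).1
    have h2 := (hlam j).2
    constructor <;> nlinarith
  have hD0 : ∀ i, 0 ≤ D i :=
    fun i => mul_nonneg hM0 (Finset.prod_nonneg fun j _ => (hfac j).1)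
  have key : ∀ i r, |Q i r - cstar r| ≤ D i * cstar r := by
    intro i
    induction i with
    | zero => intro r; simpa [hDdef] using hM r
    | succ i ih =>
      intro r
      have he : Q (i+1) r - cstar r
          = (1 - lam i * p r) * (Q i r - cstar r)
            + lam i * p r * ((B.mulVec (fun j => Q i j - cstar j)) r) := by
        have h1 := hQ i r
        have h2 : (B.mulVec (fun j => Q i j - cstar j)) r
            = (B.mulVec (Q i)) r - (B.mulVec cstar) r := by
          simp [Matrix.mulVec, dotProduct, mul_sub, Finset.sum_sub_distrib]
        have h3 := hBc r
        simp only [Pi.add_apply] at h1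
        rw [h2, h3, h1]
        ring
      have hBbd : |(B.mulVec (fun j => Q i j - cstar j)) r| ≤ D i * (θ * cstar r) := by
        have hc1 : |∑ j, B r j * (Q i j - cstar j)| ≤ ∑ j, B r j * |Q i j - cstar j| := by
          refine le_trans (Finset.abs_sum_le_sum_abs _ _) (le_of_eq ?_)
          refine Finset.sum_congr rfl fun j _ => ?_
          rw [abs_mul, abs_of_nonneg (hB r j)]
        have hc2 : ∑ j, B r j * |Q i j - cstar j| ≤ ∑ j, B r j * (D i * cstar j) :=
          Finset.sum_le_sum fun j _ => mul_le_mul_of_nonneg_left (ih j) (hB r j)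
        have hc3 : ∑ j, B r j * (D i * cstar j) = D i * (B.mulVec cstar) r := by
          simp only [Matrix.mulVec, dotProduct, Finset.mul_sum]
          exact Finset.sum_congr rfl fun j _ => by ring
        have hc4 : D i * (B.mulVec cstar) r ≤ D i * (θ * cstar r) :=
          mul_le_mul_of_nonneg_left (hBθ r) (hD0 i)
        calc |(B.mulVec (fun j => Q i j - cstar j)) r|
            = |∑ j, B r j * (Q i j - cstar j)| := rfl
          _ ≤ ∑ j, B r j * |Q i j - cstar j| := hc1
          _ ≤ ∑ j, B r j * (D i * cstar j) := hc2
          _ = D i * (B.mulVec cstar) r := hc3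
          _ ≤ D i * (θ * cstar r) := hc4
      have hlp0 : 0 ≤ lam i * p r := mul_nonneg (hlam i).1 (hp r).1.le
      have hlp1 : lam i * p r ≤ 1 := by nlinarith [(hlam i).1, (hlam i).2, (hp r).1.le, (hp r).2]
      have hfac1 : 0 ≤ 1 - lam i * p r := by linarith
      have habs : |Q (i+1) r - cstar r|
          ≤ (1 - lam i * p r) * |Q i r - cstar r|
            + lam i * p r * |(B.mulVec (fun j => Q i j - cstar j)) r| := by
        rw [he]
        refine le_trans (abs_add_le _ _) ?_
        rw [abs_mul, abs_mul, abs_of_nonneg hfac1, abs_of_nonneg hlp0]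
      have hmid : |Q (i+1) r - cstar r|
          ≤ (1 - lam i * p r) * (D i * cstar r) + lam i * p r * (D i * (θ * cstar r)) := by
        refine le_trans habs (add_le_add ?_ ?_)
        · exact mul_le_mul_of_nonneg_left (ih r) hfac1
        · exact mul_le_mul_of_nonneg_left hBbd hlp0
      have heq2 : (1 - lam i * p r) * (D i * cstar r) + lam i * p r * (D i * (θ * cstar r))
          = D i * cstar r * (1 - lam i * p r * (1 - θ)) := by ring
      have hstep : D i * cstar r * (1 - lam i * p r * (1 - θ))
          ≤ D i * cstar r * (1 - lam i * rr) := by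
        have hDc : 0 ≤ D i * cstar r := mul_nonneg (hD0 i) (hcpos r).le
        have hθ' : (0:ℝ) ≤ 1 - θ := by linarith
        have h1 : pmin * (1 - θ) ≤ p r * (1 - θ) :=
          mul_le_mul_of_nonneg_right (hppmin r) hθ'
        have h2 : lam i * (pmin * (1 - θ)) ≤ lam i * (p r * (1 - θ)) :=
          mul_le_mul_of_nonneg_left h1 (hlam i).1
        have : lam i * rr ≤ lam i * p r * (1 - θ) := by
          rw [hrrdef]
          linarith [h2, (mul_assoc (lam i) (p r) (1 - θ)).symm ▸ h2]
        nlinarith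
      have hfin : D i * cstar r * (1 - lam i * rr) = D (i+1) * cstar r := by
        simp only [hDdef, Finset.prod_range_succ]
        ring
      calc |Q (i+1) r - cstar r|
          ≤ (1 - lam i * p r) * (D i * cstar r) + lam i * p r * (D i * (θ * cstar r)) := hmid
        _ = D i * cstar r * (1 - lam i * p r * (1 - θ)) := heq2
        _ ≤ D i * cstar r * (1 - lam i * rr) := hstep
        _ = D (i+1) * cstar r := hfin
  -- D tends to 0
  have hDlim : Tendsto D atTop (nhds 0) := by
    have hub : ∀ i, D i ≤ M * Real.exp (-(rr * ∑ j ∈ Finset.range i, lam j)) := by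
      intro i
      refine mul_le_mul_of_nonneg_left ?_ hM0
      have hprod : ∏ j ∈ Finset.range i, (1 - lam j * rr)
          ≤ ∏ j ∈ Finset.range i, Real.exp (-(lam j * rr)) := by
        refine Finset.prod_le_prod (fun j _ => (hfac j).1) (fun j _ => ?_)
        have := Real.add_one_le_exp (-(lam j * rr))
        linarith
      refine le_trans hprod (le_of_eq ?_)
      rw [← Real.exp_sum]
      congr 1
      rw [Finset.mul_sum, ← Finset.sum_neg_distrib]
      exact Finset.sum_congr rfl fun j _ => by ring
    have hlb : ∀ i, (0:ℝ) ≤ D i := hD0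
    have hexp : Tendsto (fun i => M * Real.exp (-(rr * ∑ j ∈ Finset.range i, lam j))) atTop (nhds 0) := by
      have h1 : Tendsto (fun i => rr * ∑ j ∈ Finset.range i, lam j) atTop atTop :=
        hlamdiv.const_mul_atTop hrr0
      have h2 : Tendsto (fun i => -(rr * ∑ j ∈ Finset.range i, lam j)) atTop atBot :=
        tendsto_neg_atBot_iff.mpr h1
      have h3 := Real.tendsto_exp_atBot.comp h2
      have := h3.const_mul M
      simpa using this
    exact squeeze_zero hlb hub hexp
  have hfinal : Tendsto (fun i => Q i q - cstar q) atTop (nhds 0) := by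
    have hg : Tendsto (fun i => D i * cstar q) atTop (nhds 0) := by
      have := hDlim.mul_const (cstar q)
      simpa using this
    have habs : Tendsto (fun i => |Q i q - cstar q|) atTop (nhds 0) :=
      squeeze_zero (fun i => abs_nonneg _) (fun i => key i q) hg
    exact (tendsto_zero_iff_abs_tendsto_zero _).mpr habs
  have := hfinal.add_const (cstar q)
  simpa using this
end
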